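/- arXiv:2303.10086 — 2 statements merged into one kernel-verified Lean document; each statement's English description precedes it below -/
import Mathlib

section
/- Let p, q ∈ P_d with all entries of p and q strictly positive, and let (l_j, r_j)_{j=0}^k be the Vidal recursion for the pair (p, q). Define m = p ∧ q, and assume r_1 < 1. Define χ, ζ, ν, ξ ∈ ℝ^d blockwise as follows: for each j ∈ {1, …, k} and each i ∈ {l_j, …, l_{j−1}−1}, set χ_i = r_j q_i, ζ_i = r_j m_i, ξ_i = (1 − r_1/r_j) χ_i / (1 − r_1), and ν_i = (1 − r_1/r_j) ζ_i / (1 − r_1). Then ν ≺ ξ, i.e., ∑_{i=1}^t ν_i ≤ ∑_{i=1}^t ξ_i for all t ∈ {1, …, d−1} and ∑_{i=1}^d ν_i = ∑_{i=1}^d ξ_i. -/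
open Finset

noncomputable section

/-- Prefix sum of the first `k` entries of `x` (1-based: `x_1 + ⋯ + x_k`). -/
def pfx (d : ℕ) (x : Fin d → ℝ) (k : ℕ) : ℝ :=
  ∑ i : Fin d, if (i : ℕ) < k then x i else 0

/-- Tail sum `E_l(x) = ∑_{i=l}^d x_i` for 1-based `l ∈ {1,…,d}`; `E_{d+1}(x) = 0`. -/
def Etail (d : ℕ) (x : Fin d → ℝ) (l : ℕ) : ℝ :=
  ∑ i : Fin d, if l ≤ (i : ℕ) + 1 then x i else 0

/-- Membership in `P_d`: decreasingly ordered, nonnegative, summing to 1. -/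
def memP (d : ℕ) (x : Fin d → ℝ) : Prop :=
  (∀ i j : Fin d, i ≤ j → x j ≤ x i) ∧ (∀ i, 0 ≤ x i) ∧ (∑ i, x i) = 1

/-- Majorization `x ≺ y`: all partial sums of `x` bounded by those of `y`, equal total sum. -/
def Maj (d : ℕ) (x y : Fin d → ℝ) : Prop :=
  (∀ k : ℕ, k < d → pfx d x k ≤ pfx d y k) ∧ pfx d x d = pfx d y d

/-- The meet `p ∧ q` of the majorization lattice, defined componentwise. -/
def meet (d : ℕ) (p q : Fin d → ℝ) : Fin d → ℝ :=
  fun i => min (pfx d p ((i : ℕ) + 1)) (pfx d q ((i : ℕ) + 1))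
         - min (pfx d p (i : ℕ)) (pfx d q (i : ℕ))

/-- The ratio `(E_l(p) − E_L(p)) / (E_l(q) − E_L(q))` of the Vidal recursion. -/
def ratio (d : ℕ) (p q : Fin d → ℝ) (L l : ℕ) : ℝ :=
  (Etail d p l - Etail d p L) / (Etail d q l - Etail d q L)

/-- The smallest minimizer of `l ↦ ratio d p q L l` over `l ∈ {1,…,L−1}`. -/
def nextIdx (d : ℕ) (p q : Fin d → ℝ) (L : ℕ) : ℕ :=
  sInf {l | l ∈ Finset.Icc 1 (L - 1) ∧
        ∀ l' ∈ Finset.Icc 1 (L - 1), ratio d p q L l ≤ ratio d p q L l'}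

/-- Sequence of indices `l_j` of the Vidal recursion: `l_0 = d+1`,
`l_j` = smallest minimizer of the ratio over `{1,…,l_{j−1}−1}`. -/
def lSeq (d : ℕ) (p q : Fin d → ℝ) : ℕ → ℕ
  | 0 => d + 1
  | j + 1 => nextIdx d p q (lSeq d p q j)

/-- Ratios `r_j` of the Vidal recursion (meaningful for `j ≥ 1`):
`r_j = (E_{l_j}(p) − E_{l_{j−1}}(p)) / (E_{l_j}(q) − E_{l_{j−1}}(q))`. -/
def rSeq (d : ℕ) (p q : Fin d → ℝ) (j : ℕ) : ℝ :=
  ratio d p q (lSeq d p q (j - 1)) (lSeq d p q j)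


lemma pfx_zero (d : ℕ) (x : Fin d → ℝ) : pfx d x 0 = 0 := by simp [pfx]

lemma pfx_succ (d : ℕ) (x : Fin d → ℝ) (t : ℕ) :
    pfx d x (t + 1) = pfx d x t + (if h : t < d then x ⟨t, h⟩ else 0) := by
  unfold pfx
  have h1 : ∀ i : Fin d, (if (i : ℕ) < t + 1 then x i else 0)
      = (if (i : ℕ) < t then x i else 0) + (if (i : ℕ) = t then x i else 0) := by
    intro i; split_ifs <;> try omega
    all_goals ring
  rw [Finset.sum_congr rfl fun i _ => h1 i, Finset.sum_add_distrib]
  congr 1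
  split_ifs with h
  · rw [Finset.sum_eq_single (⟨t, h⟩ : Fin d)] <;> simp +contextual [Fin.ext_iff]
  · exact Finset.sum_eq_zero fun i _ => by simp; omega

lemma pfx_mono (d : ℕ) (x : Fin d → ℝ) (hx : ∀ i, 0 ≤ x i) {s t : ℕ} (h : s ≤ t) :
    pfx d x s ≤ pfx d x t := by
  induction t, h using Nat.le_induction with
  | base => exact le_rfl
  | succ n hn ih =>
    rw [pfx_succ]
    have : (0:ℝ) ≤ if h : n < d then x ⟨n, h⟩ else 0 := by
      split_ifs with h
      · exact hx _
      · exact le_rfl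
    linarith

lemma pfx_strict (d : ℕ) (x : Fin d → ℝ) (hx : ∀ i, 0 < x i) {s t : ℕ}
    (h : s < t) (hs : s < d) : pfx d x s < pfx d x t := by
  have h1 : pfx d x s < pfx d x (s+1) := by
    rw [pfx_succ]; simp [hs]; exact hx _
  exact h1.trans_le (pfx_mono d x (fun i => (hx i).le) h)

lemma pfx_total (d : ℕ) (x : Fin d → ℝ) : pfx d x d = ∑ i, x i := by
  unfold pfx; exact Finset.sum_congr rfl fun i _ => by simp [i.isLt]

lemma Etail_eq (d : ℕ) (x : Fin d → ℝ) {l : ℕ} (hl : 1 ≤ l) :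
    Etail d x l = (∑ i, x i) - pfx d x (l - 1) := by
  obtain ⟨t, rfl⟩ : ∃ t, l = t + 1 := ⟨l - 1, by omega⟩
  have : pfx d x t + Etail d x (t + 1) = ∑ i, x i := by
    unfold pfx Etail
    rw [← Finset.sum_add_distrib]
    exact Finset.sum_congr rfl fun i _ => by split_ifs <;> first | omega | ring
  simp only [Nat.add_sub_cancel]; linarith

lemma pfx_meet (d : ℕ) (p q : Fin d → ℝ) {t : ℕ} (ht : t ≤ d) :
    pfx d (meet d p q) t = min (pfx d p t) (pfx d q t) := by
  induction t with
  | zero => simp [pfx_zero]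
  | succ n ih =>
    have hn : n < d := by omega
    rw [pfx_succ, ih (by omega)]
    simp only [hn, dif_pos, meet]
    ring

lemma nextIdx_spec (d : ℕ) (p q : Fin d → ℝ) {M : ℕ} (hM : 2 ≤ M) :
    nextIdx d p q M ∈ Finset.Icc 1 (M-1) ∧
    ∀ l' ∈ Finset.Icc 1 (M-1), ratio d p q M (nextIdx d p q M) ≤ ratio d p q M l' := by
  have hne : (Finset.Icc 1 (M-1)).Nonempty := ⟨1, by simp; omega⟩
  obtain ⟨l, hl, hmin⟩ := Finset.exists_min_image _ (ratio d p q M) hne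
  have hmem : nextIdx d p q M ∈ {l | l ∈ Finset.Icc 1 (M-1) ∧
      ∀ l' ∈ Finset.Icc 1 (M-1), ratio d p q M l ≤ ratio d p q M l'} :=
    Nat.sInf_mem ⟨l, hl, hmin⟩
  exact hmem


/-- Theorem 2 of the paper: with the Vidal recursion `(l_j, r_j)` for the
pair `(p,q)`, `m = p ∧ q`, `r_1 < 1`, and `χ, ζ, ξ, ν` the blockwise-defined intermediate
and residual vectors of the greedy and thrifty protocols, the residual state of the
thrifty protocol is majorized by that of the greedy protocol: `ν ≺ ξ`. -/
theorem thrifty_residual_majorized_vidal (d : ℕ) (hd : 1 ≤ d) (p q : Fin d → ℝ)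
    (hp : memP d p) (hq : memP d q)
    (hppos : ∀ i, 0 < p i) (hqpos : ∀ i, 0 < q i)
    (k : ℕ) (hk : lSeq d p q k = 1) (hk' : ∀ j < k, lSeq d p q j ≠ 1)
    (hr1 : rSeq d p q 1 < 1)
    (χ ζ ν ξ : Fin d → ℝ)
    (hχ : ∀ j ∈ Finset.Icc 1 k, ∀ i : Fin d,
      lSeq d p q j ≤ (i : ℕ) + 1 → (i : ℕ) + 1 ≤ lSeq d p q (j - 1) - 1 →
      χ i = rSeq d p q j * q i)
    (hζ : ∀ j ∈ Finset.Icc 1 k, ∀ i : Fin d,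
      lSeq d p q j ≤ (i : ℕ) + 1 → (i : ℕ) + 1 ≤ lSeq d p q (j - 1) - 1 →
      ζ i = rSeq d p q j * meet d p q i)
    (hξ : ∀ j ∈ Finset.Icc 1 k, ∀ i : Fin d,
      lSeq d p q j ≤ (i : ℕ) + 1 → (i : ℕ) + 1 ≤ lSeq d p q (j - 1) - 1 →
      ξ i = (1 - rSeq d p q 1 / rSeq d p q j) * χ i / (1 - rSeq d p q 1))
    (hν : ∀ j ∈ Finset.Icc 1 k, ∀ i : Fin d,
      lSeq d p q j ≤ (i : ℕ) + 1 → (i : ℕ) + 1 ≤ lSeq d p q (j - 1) - 1 →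
      ν i = (1 - rSeq d p q 1 / rSeq d p q j) * ζ i / (1 - rSeq d p q 1)) :
    Maj d ν ξ := by
  classical
  obtain ⟨hpmono, hpnn, hpsum⟩ := hp
  obtain ⟨hqmono, hqnn, hqsum⟩ := hq
  set L := lSeq d p q with hLdef
  set r := rSeq d p q with hrdef
  have hL0 : L 0 = d + 1 := by rw [hLdef]; rfl
  have hLs : ∀ n, L (n + 1) = nextIdx d p q (L n) := by
    intro n; rw [hLdef]; rfl
  have hrs : ∀ j, r j = ratio d p q (L (j - 1)) (L j) := by
    intro j; rw [hrdef, hLdef]; rfl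
  -- k ≥ 1
  have hk1 : 1 ≤ k := by
    rcases Nat.eq_zero_or_pos k with h | h
    · rw [h, hL0] at hk; omega
    · exact h
  -- basic structure of L
  have hcomb : ∀ j, j ≤ k → 1 ≤ L j := by
    intro j
    induction j with
    | zero => intro _; omega
    | succ n ih =>
      intro h
      have h2 : 2 ≤ L n := by
        have h3 := ih (by omega)
        have h4 := hk' n (by omega)
        omega
      have h5 := (nextIdx_spec d p q h2).1
      rw [← hLs n] at h5
      simp only [Finset.mem_Icc] at h5
      omega
  have hspec : ∀ j, j < k → 2 ≤ L j ∧ 1 ≤ L (j+1) ∧ L (j+1) ≤ L j - 1 ∧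
      ∀ l', 1 ≤ l' → l' ≤ L j - 1 →
        ratio d p q (L j) (L (j+1)) ≤ ratio d p q (L j) l' := by
    intro j hj
    have h2 : 2 ≤ L j := by
      have h3 := hcomb j hj.le
      have h4 := hk' j hj
      omega
    obtain ⟨hmem, hmin⟩ := nextIdx_spec d p q h2
    rw [← hLs j] at hmem hmin
    simp only [Finset.mem_Icc] at hmem
    exact ⟨h2, hmem.1, hmem.2, fun l' h1 h2' =>
      hmin l' (Finset.mem_Icc.mpr ⟨h1, h2'⟩)⟩
  have hLd : ∀ j, j ≤ k → L j ≤ d + 1 := by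
    intro j
    induction j with
    | zero => intro _; omega
    | succ n ih =>
      intro h
      have := hspec n (by omega)
      have := ih (by omega)
      omega
  have hLlt : ∀ j, 1 ≤ j → j ≤ k → L j < L (j - 1) := by
    intro j h1 h2
    obtain ⟨hA, hB, hC, _⟩ := hspec (j - 1) (by omega)
    have hj : j - 1 + 1 = j := by omega
    rw [hj] at hB hC
    omega
  -- ratio in pfx form
  have hratio_pfx : ∀ Lv l, 1 ≤ l → 1 ≤ Lv →
      ratio d p q Lv l = (pfx d p (Lv - 1) - pfx d p (l - 1)) /
        (pfx d q (Lv - 1) - pfx d q (l - 1)) := by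
    intro Lv l h1 h2
    unfold ratio
    rw [Etail_eq d p h1, Etail_eq d p h2, Etail_eq d q h1, Etail_eq d q h2]
    congr 1 <;> ring
  have hrq : ∀ j, 1 ≤ j → j ≤ k →
      r j = (pfx d p (L (j-1) - 1) - pfx d p (L j - 1)) /
        (pfx d q (L (j-1) - 1) - pfx d q (L j - 1)) := by
    intro j h1 h2
    rw [hrs j]
    exact hratio_pfx (L (j-1)) (L j) (hcomb j h2) (hcomb (j-1) (by omega))
  -- positivity of denominators/numerators
  have hdenpos : ∀ j, 1 ≤ j → j ≤ k →
      0 < pfx d q (L (j-1) - 1) - pfx d q (L j - 1) := by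
    intro j h1 h2
    have hlt := hLlt j h1 h2
    have hle := hLd (j-1) (by omega)
    have hge := hcomb j h2
    have := pfx_strict d q hqpos (s := L j - 1) (t := L (j-1) - 1) (by omega) (by omega)
    linarith
  have hnumpos : ∀ j, 1 ≤ j → j ≤ k →
      0 < pfx d p (L (j-1) - 1) - pfx d p (L j - 1) := by
    intro j h1 h2
    have hlt := hLlt j h1 h2
    have hle := hLd (j-1) (by omega)
    have hge := hcomb j h2
    have := pfx_strict d p hppos (s := L j - 1) (t := L (j-1) - 1) (by omega) (by omega)
    linarith
  have hrpos : ∀ j, 1 ≤ j → j ≤ k → 0 < r j := by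
    intro j h1 h2
    rw [hrq j h1 h2]
    exact div_pos (hnumpos j h1 h2) (hdenpos j h1 h2)
  have hkey : ∀ j, 1 ≤ j → j ≤ k →
      pfx d p (L (j-1) - 1) - pfx d p (L j - 1)
        = r j * (pfx d q (L (j-1) - 1) - pfx d q (L j - 1)) := by
    intro j h1 h2
    rw [hrq j h1 h2, div_mul_cancel₀]
    exact ne_of_gt (hdenpos j h1 h2)
  -- minimality in product form
  have hmin' : ∀ j, 1 ≤ j → j ≤ k → ∀ l', 1 ≤ l' → l' ≤ L (j-1) - 1 →
      r j * (pfx d q (L (j-1) - 1) - pfx d q (l' - 1))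
        ≤ pfx d p (L (j-1) - 1) - pfx d p (l' - 1) := by
    intro j h1 h2 l' hl1 hl2
    obtain ⟨hL2, _, _, hmin⟩ := hspec (j-1) (by omega)
    have hj : j - 1 + 1 = j := by omega
    have hthis := hmin l' hl1 hl2
    rw [hj] at hthis
    rw [hratio_pfx (L (j-1)) l' hl1 (by omega)] at hthis
    have hLled : L (j-1) ≤ d + 1 := hLd (j-1) (by omega)
    have hden : 0 < pfx d q (L (j-1) - 1) - pfx d q (l' - 1) := by
      have := pfx_strict d q hqpos (s := l' - 1) (t := L (j-1) - 1) (by omega) (by omega)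
      linarith
    have h3 : ratio d p q (L (j-1)) (L j)
        * (pfx d q (L (j-1) - 1) - pfx d q (l' - 1))
        ≤ pfx d p (L (j-1) - 1) - pfx d p (l' - 1) := by
      rw [← le_div_iff₀ hden]
      exact hthis
    rw [hrs j]
    exact h3
  -- monotonicity of r
  have hrstep : ∀ j, 1 ≤ j → j + 1 ≤ k → r j ≤ r (j+1) := by
    intro j h1 h2
    have hj1 : (j + 1) - 1 = j := by omega
    have hden : 0 < pfx d q (L j - 1) - pfx d q (L (j+1) - 1) := by
      have := hdenpos (j+1) (by omega) h2
      rwa [hj1] at this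
    have hLj1 : L (j+1) ≤ L j - 1 := by
      have := hLlt (j+1) (by omega) h2
      have := hcomb (j+1) h2
      rw [hj1] at *
      omega
    have hLjle : L j - 1 ≤ L (j-1) - 1 := by
      have := hLlt j h1 (by omega)
      omega
    have hA := hmin' j h1 (by omega) (L (j+1)) (hcomb (j+1) h2) (by omega)
    have hB := hkey j h1 (by omega)
    have hC := hkey (j+1) (by omega) h2
    rw [hj1] at hC
    have h4 : r j * (pfx d q (L j - 1) - pfx d q (L (j+1) - 1))
        ≤ r (j+1) * (pfx d q (L j - 1) - pfx d q (L (j+1) - 1)) := by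
      nlinarith [hA, hB, hC]
    exact le_of_mul_le_mul_right h4 hden
  have hrmono : ∀ a b, 1 ≤ a → a ≤ b → b ≤ k → r a ≤ r b := by
    intro a b ha hab
    induction b, hab using Nat.le_induction with
    | base => intro _; exact le_rfl
    | succ n hn ih =>
      intro hbk
      exact (ih (by omega)).trans (hrstep n (by omega) hbk)
  -- breakpoint comparison of p and q prefix sums
  have hD0 : pfx d p (L 0 - 1) = pfx d q (L 0 - 1) := by
    rw [hL0]
    simp only [Nat.add_sub_cancel]
    rw [pfx_total, pfx_total, hpsum, hqsum]
  have hDk : pfx d p (L k - 1) = pfx d q (L k - 1) := by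
    rw [hk]
    simp [pfx_zero]
  have hDrel : ∀ j, j < k →
      pfx d p (L j - 1) - pfx d q (L j - 1)
        = (pfx d p (L (j+1) - 1) - pfx d q (L (j+1) - 1))
          + (r (j+1) - 1) * (pfx d q (L j - 1) - pfx d q (L (j+1) - 1)) := by
    intro j hj
    have hC := hkey (j+1) (by omega) hj
    have hj1 : (j + 1) - 1 = j := by omega
    rw [hj1] at hC
    nlinarith [hC]
  have hfwd : ∀ j, j ≤ k → (∀ t, 1 ≤ t → t ≤ j → r t ≤ 1) →
      pfx d q (L j - 1) ≤ pfx d p (L j - 1) := by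
    intro j
    induction j with
    | zero => intro _ _; exact le_of_eq hD0.symm
    | succ n ih =>
      intro h hrsmall
      have hDr := hDrel n (by omega)
      have h1 := ih (by omega) (fun t a b => hrsmall t a (by omega))
      have hq1 : pfx d q (L (n+1) - 1) ≤ pfx d q (L n - 1) := by
        apply pfx_mono d q hqnn
        have h9 := hLlt (n+1) (by omega) h
        simp only [Nat.add_sub_cancel] at h9
        omega
      have hrle := hrsmall (n+1) (by omega) le_rfl
      nlinarith [hDr, h1, hq1, hrle]
  have hbwd : ∀ i j, j + i = k → (∀ t, j < t → t ≤ k → 1 ≤ r t) →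
      pfx d q (L j - 1) ≤ pfx d p (L j - 1) := by
    intro i
    induction i with
    | zero =>
      intro j hjk _
      have : j = k := by omega
      subst this
      exact le_of_eq hDk.symm
    | succ n ih =>
      intro j hjk hrbig
      have h1 := ih (j+1) (by omega) (fun t a b => hrbig t (by omega) b)
      have hDr := hDrel j (by omega)
      have hrg := hrbig (j+1) (by omega) (by omega)
      have hq1 : pfx d q (L (j+1) - 1) ≤ pfx d q (L j - 1) := by
        apply pfx_mono d q hqnn
        have h9 := hLlt (j+1) (by omega) (by omega)
        simp only [Nat.add_sub_cancel] at h9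
        omega
      nlinarith [hDr, h1, hq1, hrg]
  have hPQ : ∀ j, j ≤ k → pfx d q (L j - 1) ≤ pfx d p (L j - 1) := by
    intro j hj
    by_cases h : ∀ t, j < t → t ≤ k → 1 ≤ r t
    · exact hbwd (k - j) j (by omega) h
    · push_neg at h
      obtain ⟨t0, ht0j, ht0k, ht0⟩ := h
      refine hfwd j hj (fun t h1 h2 => ?_)
      exact le_of_lt (lt_of_le_of_lt (hrmono t t0 h1 (by omega) ht0k) ht0)
  have hmbrk : ∀ j, j ≤ k → pfx d (meet d p q) (L j - 1) = pfx d q (L j - 1) := by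
    intro j hj
    rw [pfx_meet d p q (by have := hLd j hj; omega)]
    exact min_eq_right (hPQ j hj)
  -- coefficients
  have hr1' : 0 < 1 - r 1 := by linarith
  have hc : ∀ j, 1 ≤ j → j ≤ k → 0 ≤ (r j - r 1) / (1 - r 1) := by
    intro j h1 h2
    apply div_nonneg _ hr1'.le
    have := hrmono 1 j le_rfl h1 h2
    linarith
  -- pointwise values of ν and ξ
  have hpt : ∀ j, 1 ≤ j → j ≤ k → ∀ i : Fin d, L j ≤ (i : ℕ) + 1 →
      (i : ℕ) + 1 ≤ L (j-1) - 1 →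
      ν i = (r j - r 1) / (1 - r 1) * meet d p q i ∧
      ξ i = (r j - r 1) / (1 - r 1) * q i := by
    intro j h1 h2 i hi1 hi2
    have hm := Finset.mem_Icc.mpr ⟨h1, h2⟩
    have e1 := hν j hm i hi1 hi2
    have e2 := hζ j hm i hi1 hi2
    have e3 := hξ j hm i hi1 hi2
    have e4 := hχ j hm i hi1 hi2
    rw [e2] at e1
    rw [e4] at e3
    have h0 : r j ≠ 0 := ne_of_gt (hrpos j h1 h2)
    have h1' : (1:ℝ) - r 1 ≠ 0 := ne_of_gt hr1'
    constructor
    · rw [e1]; field_simp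
    · rw [e3]; field_simp
  -- block prefix-sum relation
  have hblock : ∀ j, j < k → ∀ t, L (j+1) - 1 ≤ t → t ≤ L j - 1 →
      (pfx d ν t - pfx d ν (L (j+1) - 1)
        = (r (j+1) - r 1) / (1 - r 1)
          * (pfx d (meet d p q) t - pfx d (meet d p q) (L (j+1) - 1)) ∧
       pfx d ξ t - pfx d ξ (L (j+1) - 1)
        = (r (j+1) - r 1) / (1 - r 1) * (pfx d q t - pfx d q (L (j+1) - 1))) := by
    intro j hj t ht1 ht2
    induction t, ht1 using Nat.le_induction with
    | base => simp
    | succ n hn ih =>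
      obtain ⟨ihν, ihξ⟩ := ih (by omega)
      have hnd : n < d := by
        have := hLd j hj.le
        omega
      have hi1 : L (j+1) ≤ n + 1 := by
        have := hcomb (j+1) hj
        omega
      have hj1 : (j + 1) - 1 = j := by omega
      obtain ⟨eν, eξ⟩ := hpt (j+1) (by omega) hj ⟨n, hnd⟩ hi1 (by rw [hj1]; exact ht2)
      constructor
      · rw [pfx_succ d ν n, pfx_succ d (meet d p q) n, dif_pos hnd, dif_pos hnd]
        rw [eν] at *
        linarith [ihν]
      · rw [pfx_succ d ξ n, pfx_succ d q n, dif_pos hnd, dif_pos hnd]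
        rw [eξ] at *
        linarith [ihξ]
  -- main downward induction
  have hmain : ∀ i, i ≤ k →
      (pfx d ν (L (k - i) - 1) = pfx d ξ (L (k - i) - 1) ∧
       ∀ t, t ≤ L (k - i) - 1 → pfx d ν t ≤ pfx d ξ t) := by
    intro i
    induction i with
    | zero =>
      intro _
      rw [Nat.sub_zero, hk]
      refine ⟨by simp [pfx_zero], fun t ht => ?_⟩
      have : t = 0 := by omega
      subst this
      simp [pfx_zero]
    | succ n ih =>
      intro h
      have hjk : k - (n+1) < k := by omega
      have hsucc : k - n = (k - (n+1)) + 1 := by omega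
      obtain ⟨ihEq, ihLe⟩ := ih (by omega)
      rw [hsucc] at ihEq ihLe
      set j := k - (n+1) with hjdef
      have hGle : L (j+1) - 1 ≤ L j - 1 := by
        obtain ⟨_, hB, hC, _⟩ := hspec j hjk
        omega
      obtain ⟨bν, bξ⟩ := hblock j hjk (L j - 1) hGle le_rfl
      have hm1 := hmbrk j hjk.le
      have hm2 := hmbrk (j+1) hjk
      rw [hm1, hm2] at bν
      have hEq : pfx d ν (L j - 1) = pfx d ξ (L j - 1) := by
        linarith [bν, bξ, ihEq]
      refine ⟨hEq, fun t ht => ?_⟩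
      by_cases hcase : t ≤ L (j+1) - 1
      · exact ihLe t hcase
      · push_neg at hcase
        obtain ⟨cν, cξ⟩ := hblock j hjk t (by omega) ht
        have htd : t ≤ d := by
          have := hLd j hjk.le
          omega
        have hmt : pfx d (meet d p q) t ≤ pfx d q t := by
          rw [pfx_meet d p q htd]
          exact min_le_right _ _
        have hcnn : 0 ≤ (r (j+1) - r 1) / (1 - r 1) := hc (j+1) (by omega) hjk
        have hprod := mul_nonneg hcnn (sub_nonneg.2 hmt)
        rw [hm2] at cν
        linarith [cν, cξ, ihEq, hprod]
  obtain ⟨hfin1, hfin2⟩ := hmain k le_rfl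
  rw [Nat.sub_self, hL0, Nat.add_sub_cancel] at hfin1 hfin2
  exact ⟨fun t htd => hfin2 t (by omega), hfin1⟩

end
end

section
/- Let p, q ∈ P_d with all entries of p and q strictly positive, and let (l_j, r_j)_{j=0}^k be the Vidal recursion for the pair (p, q). Define χ ∈ ℝ^d blockwise by χ_i = r_j q_i for i ∈ {l_j, …, l_{j−1}−1}, j ∈ {1, …, k}. Then χ ∈ P_d (its entries are nonnegative, decreasingly ordered, and sum to 1) and p ≺ χ. -/
open Finset

noncomputable section

lemma vid_Etail_sub (d : ℕ) (x : Fin d → ℝ) {l L : ℕ} (h : l ≤ L) :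
    Etail d x l - Etail d x L
      = ∑ i : Fin d, if l ≤ (i : ℕ) + 1 ∧ (i : ℕ) + 1 < L then x i else 0 := by
  rw [Etail, Etail, ← Finset.sum_sub_distrib]
  refine Finset.sum_congr rfl fun i _ => ?_
  split_ifs <;> simp_all <;> omega

lemma vid_pfx_add_Etail (d : ℕ) (x : Fin d → ℝ) (k : ℕ) :
    pfx d x k + Etail d x (k+1) = ∑ i, x i := by
  rw [pfx, Etail, ← Finset.sum_add_distrib]
  refine Finset.sum_congr rfl fun i _ => ?_
  split_ifs <;> simp_all <;> omega

lemma vid_Etail_one (d : ℕ) (x : Fin d → ℝ) : Etail d x 1 = ∑ i, x i := by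
  rw [Etail]; refine Finset.sum_congr rfl fun i _ => ?_; simp

lemma vid_Etail_top (d : ℕ) (x : Fin d → ℝ) : Etail d x (d+1) = 0 := by
  rw [Etail]
  refine Finset.sum_eq_zero fun i _ => ?_
  rw [if_neg]; omega

lemma vid_Etail_sub_pos (d : ℕ) (x : Fin d → ℝ) (hx : ∀ i, 0 < x i) {l L : ℕ}
    (h1 : 1 ≤ l) (h2 : l < L) (h3 : L ≤ d + 1) :
    0 < Etail d x l - Etail d x L := by
  rw [vid_Etail_sub d x h2.le]
  have hld : l - 1 < d := by omega
  refine Finset.sum_pos' (fun i _ => ?_) ⟨⟨l-1, hld⟩, Finset.mem_univ _, ?_⟩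
  · split_ifs with h
    · exact (hx i).le
    · exact le_rfl
  · rw [if_pos]
    · exact hx _
    · simp; omega

lemma vid_nextIdx_spec (d : ℕ) (p q : Fin d → ℝ) {L : ℕ} (h2 : 2 ≤ L) :
    nextIdx d p q L ∈ Finset.Icc 1 (L-1) ∧
      ∀ l' ∈ Finset.Icc 1 (L-1), ratio d p q L (nextIdx d p q L) ≤ ratio d p q L l' := by
  have hne : (Finset.Icc 1 (L-1)).Nonempty := by
    refine ⟨1, ?_⟩; simp; omega
  obtain ⟨l₀, hl₀, hmin⟩ := Finset.exists_min_image (Finset.Icc 1 (L-1)) (ratio d p q L) hne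
  exact Nat.sInf_mem (⟨l₀, hl₀, hmin⟩ : {l | l ∈ Finset.Icc 1 (L - 1) ∧
        ∀ l' ∈ Finset.Icc 1 (L - 1), ratio d p q L l ≤ ratio d p q L l'}.Nonempty)

/-- the intermediate state `χ` of Vidal's protocol, defined blockwise by
`χ_i = r_j q_i` for `i ∈ {l_j,…,l_{j−1}−1}`, belongs to `P_d` and majorizes `p`. -/
theorem vidal_intermediate_state (d : ℕ) (hd : 1 ≤ d) (p q : Fin d → ℝ)
    (hp : memP d p) (hq : memP d q)
    (hppos : ∀ i, 0 < p i) (hqpos : ∀ i, 0 < q i)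
    (k : ℕ) (hk : lSeq d p q k = 1) (hk' : ∀ j < k, lSeq d p q j ≠ 1)
    (χ : Fin d → ℝ)
    (hχ : ∀ j ∈ Finset.Icc 1 k, ∀ i : Fin d,
      lSeq d p q j ≤ (i : ℕ) + 1 → (i : ℕ) + 1 ≤ lSeq d p q (j - 1) - 1 →
      χ i = rSeq d p q j * q i) :
    memP d χ ∧ Maj d p χ := by
  obtain ⟨hpmono, hpnn, hpsum⟩ := hp
  obtain ⟨hqmono, hqnn, hqsum⟩ := hq
  set L : ℕ → ℕ := lSeq d p q with hLdef
  -- basic bounds on the index sequence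
  have hL : ∀ j ≤ k, 1 ≤ L j ∧ L j ≤ d + 1 := by
    intro j
    induction j with
    | zero => intro _; constructor <;> simp [hLdef, lSeq]
    | succ n ih =>
      intro h
      have hn := ih (by omega)
      have h2 : 2 ≤ L n := by
        have := hk' n (by omega); omega
      have hspec := (vid_nextIdx_spec d p q h2).1
      simp only [Finset.mem_Icc] at hspec
      have : L (n+1) = nextIdx d p q (L n) := rfl
      omega
  have hstep : ∀ j < k, 1 ≤ L (j+1) ∧ L (j+1) ≤ L j - 1 := by
    intro j hj
    have hn := hL j (by omega)
    have h2 : 2 ≤ L j := by have := hk' j hj; omega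
    have hspec := (vid_nextIdx_spec d p q h2).1
    simp only [Finset.mem_Icc] at hspec
    have : L (j+1) = nextIdx d p q (L j) := rfl
    omega
  have hanti : ∀ j, j ≤ k → ∀ j', j' ≤ j → L j ≤ L j' := by
    intro j
    induction j with
    | zero =>
      intro _ j' h
      have h0 : j' = 0 := by omega
      rw [h0]
    | succ n ih =>
      intro h2 j' h
      rcases Nat.eq_or_lt_of_le h with h' | h'
      · rw [h']
      · have hs := hstep n (by omega)
        have := ih (by omega) j' (by omega)
        omega
  -- minimality of the ratio
  have hrmin : ∀ j, 1 ≤ j → j ≤ k → ∀ m, 1 ≤ m → m < L (j-1) →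
      rSeq d p q j * (Etail d q m - Etail d q (L (j-1))) ≤
        Etail d p m - Etail d p (L (j-1)) := by
    intro j hj hjk m hm hmL
    have hLj1 := hL (j-1) (by omega)
    have h2 : 2 ≤ L (j-1) := by omega
    have hden : 0 < Etail d q m - Etail d q (L (j-1)) :=
      vid_Etail_sub_pos d q hqpos hm hmL hLj1.2
    have hspec := (vid_nextIdx_spec d p q h2).2 m (by simp [Finset.mem_Icc]; omega)
    have hr : rSeq d p q j ≤ ratio d p q (L (j-1)) m := by
      have hjj : j - 1 + 1 = j := by omega
      have : L j = nextIdx d p q (L (j-1)) := by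
        conv_lhs => rw [← hjj]
        rfl
      rw [rSeq, ← hLdef, this]
      exact hspec
    rw [ratio] at hr
    calc rSeq d p q j * (Etail d q m - Etail d q (L (j-1)))
        ≤ (Etail d p m - Etail d p (L (j-1))) / (Etail d q m - Etail d q (L (j-1)))
            * (Etail d q m - Etail d q (L (j-1))) := by
          exact mul_le_mul_of_nonneg_right hr hden.le
      _ = Etail d p m - Etail d p (L (j-1)) := div_mul_cancel₀ _ hden.ne'
  have hLlt : ∀ j, 1 ≤ j → j ≤ k → L j < L (j-1) := by
    intro j hj hjk
    have := hstep (j-1) (by omega)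
    have hjj : j - 1 + 1 = j := by omega
    rw [hjj] at this
    omega
  have hrdef : ∀ j, 1 ≤ j → j ≤ k →
      rSeq d p q j * (Etail d q (L j) - Etail d q (L (j-1))) =
        Etail d p (L j) - Etail d p (L (j-1)) := by
    intro j hj hjk
    have hLj := hL j hjk
    have hLj1 := hL (j-1) (by omega)
    have hden : 0 < Etail d q (L j) - Etail d q (L (j-1)) :=
      vid_Etail_sub_pos d q hqpos hLj.1 (hLlt j hj hjk) hLj1.2
    rw [rSeq, ← hLdef, ratio]
    exact div_mul_cancel₀ _ hden.ne'
  have hrpos : ∀ j, 1 ≤ j → j ≤ k → 0 < rSeq d p q j := by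
    intro j hj hjk
    have hLj := hL j hjk
    have hLj1 := hL (j-1) (by omega)
    have hdenq : 0 < Etail d q (L j) - Etail d q (L (j-1)) :=
      vid_Etail_sub_pos d q hqpos hLj.1 (hLlt j hj hjk) hLj1.2
    have hdenp : 0 < Etail d p (L j) - Etail d p (L (j-1)) :=
      vid_Etail_sub_pos d p hppos hLj.1 (hLlt j hj hjk) hLj1.2
    rw [rSeq, ← hLdef, ratio]
    exact div_pos hdenp hdenq
  -- block sums of χ
  have hblock : ∀ j, 1 ≤ j → j ≤ k → ∀ m, L j ≤ m → m ≤ L (j-1) →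
      Etail d χ m - Etail d χ (L (j-1)) =
        rSeq d p q j * (Etail d q m - Etail d q (L (j-1))) := by
    intro j hj hjk m hm hmL
    have hLj1 := hL (j-1) (by omega)
    rw [vid_Etail_sub d χ hmL, vid_Etail_sub d q hmL, Finset.mul_sum]
    refine Finset.sum_congr rfl fun i _ => ?_
    split_ifs with h
    · exact hχ j (by simp [Finset.mem_Icc]; omega) i (by omega) (by omega)
    · simp
  -- Etail of χ agrees with p at block boundaries
  have hEchi : ∀ j ≤ k, Etail d χ (L j) = Etail d p (L j) := by
    intro j
    induction j with
    | zero =>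
      intro _
      have h0 : L 0 = d + 1 := rfl
      rw [h0, vid_Etail_top, vid_Etail_top]
    | succ n ih =>
      intro h
      have hb := hblock (n+1) (by omega) h (L (n+1)) le_rfl
        (by have := hLlt (n+1) (by omega) h; simp at this ⊢; omega)
      have hr := hrdef (n+1) (by omega) h
      simp only [Nat.add_sub_cancel] at hb hr
      have := ih (by omega)
      linarith
  -- every position lies in a block
  have hblockex : ∀ m, 1 ≤ m → m ≤ d → ∃ j, 1 ≤ j ∧ j ≤ k ∧ L j ≤ m ∧ m < L (j-1) := by
    have key : ∀ j ≤ k, ∀ m, L j ≤ m → m ≤ d →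
        ∃ j', 1 ≤ j' ∧ j' ≤ k ∧ L j' ≤ m ∧ m < L (j'-1) := by
      intro j
      induction j with
      | zero =>
        intro _ m hm hmd
        have h0 : L 0 = d + 1 := rfl
        omega
      | succ n ih =>
        intro h m hm hmd
        rcases le_or_gt (L n) m with h' | h'
        · exact ih (by omega) m h' hmd
        · exact ⟨n+1, by omega, h, hm, by simpa using h'⟩
    intro m hm hmd
    exact key k le_rfl m (by rw [hk]; omega) hmd
  -- tail inequality
  have hchile : ∀ m, 1 ≤ m → m ≤ d → Etail d χ m ≤ Etail d p m := by
    intro m hm hmd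
    obtain ⟨j, hj1, hjk, hjm, hmj⟩ := hblockex m hm hmd
    have hb := hblock j hj1 hjk m hjm hmj.le
    have hmin := hrmin j hj1 hjk m hm hmj
    have he := hEchi (j-1) (by omega)
    linarith
  -- r is monotone
  have hradj : ∀ n, 1 ≤ n → n + 1 ≤ k → rSeq d p q n ≤ rSeq d p q (n+1) := by
    intro n hn hnk
    have hLn1 := hL (n+1) hnk
    have hLn := hL n (by omega)
    have hLn0 := hL (n-1) (by omega)
    have hlt1 : L (n+1) < L n := hLlt (n+1) (by omega) hnk
    have hlt0 : L n < L (n-1) := hLlt n hn (by omega)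
    have hmin := hrmin n hn (by omega) (L (n+1)) hLn1.1 (by omega)
    have hdefn := hrdef n hn (by omega)
    have hden : 0 < Etail d q (L (n+1)) - Etail d q (L n) :=
      vid_Etail_sub_pos d q hqpos hLn1.1 hlt1 hLn.2
    have hkey : rSeq d p q n * (Etail d q (L (n+1)) - Etail d q (L n)) ≤
        Etail d p (L (n+1)) - Etail d p (L n) := by nlinarith [hmin, hdefn]
    have hr1 : rSeq d p q (n+1) =
        (Etail d p (L (n+1)) - Etail d p (L n)) /
          (Etail d q (L (n+1)) - Etail d q (L n)) := by
      rw [rSeq, ← hLdef, ratio]; simp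
    rw [hr1, le_div_iff₀ hden]
    exact hkey
  have hrmono : ∀ a b, 1 ≤ a → a ≤ b → b ≤ k → rSeq d p q a ≤ rSeq d p q b := by
    intro a b ha hab
    induction b with
    | zero => omega
    | succ n ih =>
      intro h
      rcases Nat.eq_or_lt_of_le hab with h' | h'
      · rw [h']
      · exact le_trans (ih (by omega) (by omega)) (hradj n (by omega) h)
  -- χ is given blockwise
  have hchival : ∀ i : Fin d, ∃ j, 1 ≤ j ∧ j ≤ k ∧ L j ≤ (i:ℕ)+1 ∧ (i:ℕ)+1 < L (j-1) ∧
      χ i = rSeq d p q j * q i := by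
    intro i
    obtain ⟨j, hj1, hjk, hjm, hmj⟩ := hblockex ((i:ℕ)+1) (by omega) (by omega)
    have hLj1 := hL (j-1) (by omega)
    exact ⟨j, hj1, hjk, hjm, hmj,
      hχ j (by simp [Finset.mem_Icc]; omega) i hjm (by omega)⟩
  have hchinn : ∀ i, 0 ≤ χ i := by
    intro i
    obtain ⟨j, hj1, hjk, _, _, hv⟩ := hchival i
    rw [hv]
    exact mul_nonneg (hrpos j hj1 hjk).le (hqnn i)
  have hchimono : ∀ i i' : Fin d, i ≤ i' → χ i' ≤ χ i := by
    intro i i' hii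
    obtain ⟨j, hj1, hjk, hjm, hmj, hv⟩ := hchival i
    obtain ⟨j', hj1', hjk', hjm', hmj', hv'⟩ := hchival i'
    have hii' : (i:ℕ) ≤ (i':ℕ) := hii
    have hjj : j' ≤ j := by
      by_contra hc
      push_neg at hc
      have : L (j'-1) ≤ L j := hanti (j'-1) (by omega) j (by omega)
      omega
    have hr : rSeq d p q j' ≤ rSeq d p q j := hrmono j' j hj1' hjj hjk
    rw [hv, hv']
    calc rSeq d p q j' * q i' ≤ rSeq d p q j * q i' :=
          mul_le_mul_of_nonneg_right hr (hqnn i')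
      _ ≤ rSeq d p q j * q i :=
          mul_le_mul_of_nonneg_left (hqmono i i' hii) (hrpos j hj1 hjk).le
  have hchisum : (∑ i, χ i) = 1 := by
    have h1 := hEchi k le_rfl
    rw [hk] at h1
    rw [← vid_Etail_one d χ, h1, vid_Etail_one, hpsum]
  refine ⟨⟨hchimono, hchinn, hchisum⟩, ?_, ?_⟩
  · intro k' hk'd
    have h1 := vid_pfx_add_Etail d p k'
    have h2 := vid_pfx_add_Etail d χ k'
    have h3 := hchile (k'+1) (by omega) (by omega)
    rw [hpsum] at h1
    rw [hchisum] at h2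
    linarith
  · have h1 := vid_pfx_add_Etail d p d
    have h2 := vid_pfx_add_Etail d χ d
    rw [hpsum, vid_Etail_top] at h1
    rw [hchisum, vid_Etail_top] at h2
    linarith

end
end
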